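/- For every M > 0 there exist μ > 0 and C > 0 such that the following holds. Let c₃, γ ∈ ℝ with |c₃| + |γ| ≤ μ, and let U solve the profile ODE with parameters (c₃, γ) and satisfy sup_{y ∈ (−1,1)} |U(y)| ≤ M(|c₃| + |γ|). Then for all y ∈ (−1,1), |U'(y) − c₃ ln(1−y²)| ≤ C (|c₃| + |γ|). -/

import Mathlib

/-!
Put `V = U / (1 - y²)`. The profile ODE becomes the Riccati equation
`V' = c₃ / (1 - y²) - V² / 2` with `V(0) = γ`, so `V = γ + c₃ artanh y - A / 2` where
`A = ∫₀ʸ V²`. With `ε = |c₃| + |γ|`, as long as `|A| ≤ ε` this gives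
`|V| ≤ 3ε (1 + |log (1 - y²)|)`, hence `V² ≤ 306 ε² / √(1 - y²)`, whose integral over
`(-1, 1)` is `O(ε²)`. For small `ε` the barrier `400 ε² arcsin y` therefore closes the
bootstrap, and `|A| ≤ ε` on all of `(-1, 1)`. Finally
`U' - c₃ log (1 - y²) = c₃ - 2yγ - c₃ (2y artanh y + log (1 - y²)) + yA - (1 - y²)V²/2`,
where `2y artanh y + log (1 - y²) = (1 + y) log (1 + y) + (1 - y) log (1 - y)` is bounded, so
every term is `O(ε)`.
-/

open Set

/-- `U` solves the profile ODE with parameters `(c₃, γ)`: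
`U` is continuous on `[-1,1]`, `C²` on `(-1,1)`, satisfies
`(1-y²)U' + 2yU + U²/2 = c₃(1-y²)` on `(-1,1)`, and `U(0) = γ`. -/
def SolvesProfileODE (c₃ γ : ℝ) (U : ℝ → ℝ) : Prop :=
  ContinuousOn U (Icc (-1) 1) ∧
  ContDiffOn ℝ 2 U (Ioo (-1) 1) ∧
  (∀ y ∈ Ioo (-1 : ℝ) 1,
    (1 - y ^ 2) * deriv U y + 2 * y * U y + (1 / 2) * (U y) ^ 2 = c₃ * (1 - y ^ 2)) ∧
  U 0 = γ

open Real Topology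

namespace Real

theorem artanh_eq_half_log_sub {x : ℝ} (hx : x ∈ Ioo (-1) 1) :
    artanh x = (log (1 + x) - log (1 - x)) / 2 := by
  rw [artanh_eq_half_log (Ioo_subset_Icc_self hx),
    log_div (by linarith [hx.1]) (by linarith [hx.2])]
  ring

theorem hasDerivAt_artanh {x : ℝ} (hx : x ∈ Ioo (-1) 1) :
    HasDerivAt artanh (1 - x ^ 2)⁻¹ x := by
  have hp : 1 + x ≠ 0 := by linarith [hx.1]
  have hm : 1 - x ≠ 0 := by linarith [hx.2]
  have hlog : HasDerivAt (fun t ↦ (log (1 + t) - log (1 - t)) / 2)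
      ((1 / (1 + x) - -1 / (1 - x)) / 2) x :=
    ((((hasDerivAt_id x).const_add 1).log hp).sub
      (((hasDerivAt_id x).const_sub 1).log hm)).div_const 2
  refine (hlog.congr_of_eventuallyEq ?_).congr_deriv ?_
  · filter_upwards [Ioo_mem_nhds hx.1 hx.2] with t ht using artanh_eq_half_log_sub ht
  · rw [show 1 - x ^ 2 = (1 + x) * (1 - x) by ring]
    field_simp
    ring

theorem abs_artanh_le {x : ℝ} (hx : x ∈ Ioo (-1) 1) :
    |artanh x| ≤ 1 + |log (1 - x ^ 2)| := by
  have hp : 0 < 1 + x := by linarith [hx.1]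
  have hm : 0 < 1 - x := by linarith [hx.2]
  have hsum : log (1 - x ^ 2) = log (1 + x) + log (1 - x) := by
    rw [← log_mul hp.ne' hm.ne']; ring_nf
  have hp1 := log_le_sub_one_of_pos hp
  have hm1 := log_le_sub_one_of_pos hm
  rw [artanh_eq_half_log_sub hx, abs_le]
  constructor <;> cases abs_cases (log (1 - x ^ 2)) <;> linarith

theorem sq_one_add_abs_log_mul_sqrt_le {x : ℝ} (h0 : 0 < x) (h1 : x ≤ 1) :
    (1 + |log x|) ^ 2 * √x ≤ 34 := by
  have hq : |log x * x ^ (1 / 4 : ℝ)| < 4 := by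
    simpa using abs_log_mul_self_rpow_lt x (1 / 4) h0 h1 (by norm_num)
  have hsqrt : √x = (x ^ (1 / 4 : ℝ)) ^ 2 := by
    rw [sqrt_eq_rpow, ← rpow_natCast, ← rpow_mul h0.le]; norm_num
  have hlog : log x ^ 2 * √x ≤ 16 := by
    rw [hsqrt, ← mul_pow, ← sq_abs]
    nlinarith [abs_nonneg (log x * x ^ (1 / 4 : ℝ))]
  have hs1 : √x ≤ 1 := sqrt_le_one.mpr h1
  nlinarith [sq_abs (log x), sqrt_nonneg x, sq_nonneg (1 - |log x|)]

theorem abs_mul_log_le_two {t : ℝ} (h0 : 0 < t) (h2 : t ≤ 2) : |t * log t| ≤ 2 := by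
  rcases le_or_gt t 1 with h1 | h1
  · rw [mul_comm]; exact (abs_log_mul_self_lt t h0 h1).le.trans (by norm_num)
  · have hlog := log_le_sub_one_of_pos h0
    rw [abs_of_nonneg (mul_nonneg h0.le (log_nonneg h1.le))]
    nlinarith

theorem abs_two_mul_mul_artanh_add_log_le {y : ℝ} (hy : y ∈ Ioo (-1) 1) :
    |2 * y * artanh y + log (1 - y ^ 2)| ≤ 4 := by
  have hp : 0 < 1 + y := by linarith [hy.1]
  have hm : 0 < 1 - y := by linarith [hy.2]
  have hsplit : 2 * y * artanh y + log (1 - y ^ 2) =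
      (1 + y) * log (1 + y) + (1 - y) * log (1 - y) := by
    rw [artanh_eq_half_log_sub hy, show 1 - y ^ 2 = (1 + y) * (1 - y) by ring,
      log_mul hp.ne' hm.ne']
    ring
  rw [hsplit]
  calc _ ≤ |(1 + y) * log (1 + y)| + |(1 - y) * log (1 - y)| := abs_add_le _ _
    _ ≤ 2 + 2 := add_le_add (abs_mul_log_le_two hp (by linarith [hy.2]))
        (abs_mul_log_le_two hm (by linarith [hy.1]))
    _ = 4 := by norm_num

end Real

section

variable {A V : ℝ → ℝ} {K ε : ℝ}

theorem abs_le_of_hasDerivAt_sq_Ico (hK : 0 ≤ K) (hKε : K * (π / 2) ≤ ε)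
    (hA : ∀ s ∈ Ico (0 : ℝ) 1, HasDerivAt A (V s ^ 2) s) (hA0 : A 0 = 0)
    (hV : ∀ s ∈ Ico (0 : ℝ) 1, |A s| ≤ ε → V s ^ 2 < K * (1 / √(1 - s ^ 2))) :
    ∀ y ∈ Ico (0 : ℝ) 1, |A y| ≤ ε := by
  intro y hy
  have hsub : Icc 0 y ⊆ Ico (0 : ℝ) 1 := fun s hs ↦ ⟨hs.1, hs.2.trans_lt hy.2⟩
  have hcont : ContinuousOn A (Icc 0 y) := fun s hs ↦
    (hA s (hsub hs)).continuousAt.continuousWithinAt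
  have hnonneg : 0 ≤ A y := by
    have hmono : MonotoneOn A (Icc 0 y) :=
      monotoneOn_of_hasDerivWithinAt_nonneg (convex_Icc 0 y) hcont
        (fun s hs ↦ (hA s (hsub (interior_subset hs))).hasDerivWithinAt)
        (fun s _ ↦ sq_nonneg (V s))
    simpa [hA0] using hmono (left_mem_Icc.2 hy.1) (right_mem_Icc.2 hy.1) hy.1
  -- Where `A` touches the barrier `K * arcsin`, `|A| ≤ ε`, so `A'` is below the barrier's slope.
  have hbarrier : A y ≤ K * arcsin y := by
    refine image_le_of_deriv_right_lt_deriv_boundary' hcont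
      (fun s hs ↦ (hA s (hsub (Ico_subset_Icc_self hs))).hasDerivWithinAt)
      (by simp [hA0]) (by fun_prop : Continuous fun s ↦ K * arcsin s).continuousOn
      (fun s hs ↦ ((hasDerivAt_arcsin (by linarith [hs.1]) (by linarith [hs.2, hy.2])).const_mul
        K).hasDerivWithinAt) (fun s hs hAs ↦ hV s (hsub (Ico_subset_Icc_self hs)) ?_)
      (right_mem_Icc.2 hy.1)
    have := arcsin_le_pi_div_two s
    have := arcsin_nonneg.2 hs.1
    rw [hAs, abs_of_nonneg (by positivity)]
    nlinarith
  rw [abs_of_nonneg hnonneg]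
  nlinarith [arcsin_le_pi_div_two y]

theorem abs_le_of_hasDerivAt_sq_Ioo (hK : 0 ≤ K) (hKε : K * (π / 2) ≤ ε)
    (hA : ∀ s ∈ Ioo (-1 : ℝ) 1, HasDerivAt A (V s ^ 2) s) (hA0 : A 0 = 0)
    (hV : ∀ s ∈ Ioo (-1 : ℝ) 1, |A s| ≤ ε → V s ^ 2 < K * (1 / √(1 - s ^ 2))) :
    ∀ y ∈ Ioo (-1 : ℝ) 1, |A y| ≤ ε := by
  have hIco : ∀ s ∈ Ico (0 : ℝ) 1, s ∈ Ioo (-1 : ℝ) 1 := fun s hs ↦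
    ⟨by linarith [hs.1], hs.2⟩
  have hneg : ∀ s ∈ Ico (0 : ℝ) 1, -s ∈ Ioo (-1 : ℝ) 1 := fun s hs ↦
    ⟨by linarith [hs.2], by linarith [hs.1]⟩
  have hright := abs_le_of_hasDerivAt_sq_Ico hK hKε (fun s hs ↦ hA s (hIco s hs)) hA0
    (fun s hs ↦ hV s (hIco s hs))
  have hleft := abs_le_of_hasDerivAt_sq_Ico (A := fun s ↦ -A (-s)) (V := fun s ↦ V (-s)) hK hKε
    (fun s hs ↦ (((hA (-s) (hneg s hs)).comp s (hasDerivAt_neg s)).neg).congr_deriv (by ring))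
    (by simp [hA0]) (fun s hs h ↦ by simpa using hV (-s) (hneg s hs) (by simpa using h))
  intro y hy
  rcases le_total 0 y with h | h
  · exact hright y ⟨h, hy.2⟩
  · simpa using hleft (-y) ⟨by linarith, by linarith [hy.1]⟩

end

theorem one_sub_sq_pos_of_mem_Ioo {y : ℝ} (hy : y ∈ Ioo (-1 : ℝ) 1) : 0 < 1 - y ^ 2 := by
  nlinarith [hy.1, hy.2]

noncomputable def profileRatio (U : ℝ → ℝ) (y : ℝ) : ℝ := U y / (1 - y ^ 2)

/-- `∫₀ʸ V²` for `V = profileRatio U`, in closed form: integrate the Riccati equation. -/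
noncomputable def profileSqIntegral (c₃ γ : ℝ) (U : ℝ → ℝ) (y : ℝ) : ℝ :=
  2 * (γ + c₃ * artanh y - profileRatio U y)

section

variable {c₃ γ ε y : ℝ} {U : ℝ → ℝ}

theorem SolvesProfileODE.deriv_eq (h : SolvesProfileODE c₃ γ U) (hy : y ∈ Ioo (-1 : ℝ) 1) :
    deriv U y = c₃ - 2 * y * profileRatio U y - (1 - y ^ 2) * profileRatio U y ^ 2 / 2 := by
  have hpos := one_sub_sq_pos_of_mem_Ioo hy
  have hode := h.2.2.1 y hy
  rw [profileRatio]
  field_simp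
  linear_combination 2 * hode

theorem SolvesProfileODE.hasDerivAt_profileRatio (h : SolvesProfileODE c₃ γ U)
    (hy : y ∈ Ioo (-1 : ℝ) 1) :
    HasDerivAt (profileRatio U) (c₃ / (1 - y ^ 2) - profileRatio U y ^ 2 / 2) y := by
  have hpos := one_sub_sq_pos_of_mem_Ioo hy
  have hU : HasDerivAt U (deriv U y) y :=
    ((h.2.1.differentiableOn (by norm_num)).differentiableAt (Ioo_mem_nhds hy.1 hy.2)).hasDerivAt
  have hden : HasDerivAt (fun t ↦ 1 - t ^ 2) (-(2 * y)) y := by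
    simpa using (hasDerivAt_pow 2 y).const_sub 1
  refine (hU.div hden hpos.ne').congr_deriv ?_
  rw [h.deriv_eq hy, profileRatio]
  field_simp
  ring

theorem SolvesProfileODE.hasDerivAt_profileSqIntegral (h : SolvesProfileODE c₃ γ U)
    (hy : y ∈ Ioo (-1 : ℝ) 1) :
    HasDerivAt (profileSqIntegral c₃ γ U) (profileRatio U y ^ 2) y := by
  have hpos := one_sub_sq_pos_of_mem_Ioo hy
  refine ((((hasDerivAt_artanh hy).const_mul c₃).const_add γ).sub
    (h.hasDerivAt_profileRatio hy)).const_mul 2 |>.congr_deriv ?_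
  field_simp
  ring

theorem SolvesProfileODE.profileSqIntegral_zero (h : SolvesProfileODE c₃ γ U) :
    profileSqIntegral c₃ γ U 0 = 0 := by
  simp [profileSqIntegral, profileRatio, h.2.2.2]

theorem abs_profileRatio_le (hc : |c₃| + |γ| ≤ ε)
    (hA : |profileSqIntegral c₃ γ U y| ≤ ε) (hy : y ∈ Ioo (-1 : ℝ) 1) :
    |profileRatio U y| ≤ 3 * ε * (1 + |log (1 - y ^ 2)|) := by
  have hV : profileRatio U y = γ + c₃ * artanh y - profileSqIntegral c₃ γ U y / 2 := by
    rw [profileSqIntegral]; ring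
  have hc₃ : |c₃ * artanh y| ≤ ε * (1 + |log (1 - y ^ 2)|) := by
    rw [abs_mul]
    exact mul_le_mul (by linarith [abs_nonneg γ]) (abs_artanh_le hy) (abs_nonneg _)
      (by linarith [abs_nonneg γ, abs_nonneg c₃])
  have hL : 0 ≤ ε * |log (1 - y ^ 2)| :=
    mul_nonneg (by linarith [abs_nonneg γ, abs_nonneg c₃]) (abs_nonneg _)
  rw [hV]
  calc _ ≤ |γ| + |c₃ * artanh y| + |profileSqIntegral c₃ γ U y| / 2 := by
        refine (abs_sub _ _).trans ?_
        rw [abs_div, abs_two]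
        linarith [abs_add_le γ (c₃ * artanh y)]
    _ ≤ _ := by linarith [abs_nonneg c₃, abs_nonneg γ]

theorem profileRatio_sq_mul_sqrt_le (hc : |c₃| + |γ| ≤ ε)
    (hA : |profileSqIntegral c₃ γ U y| ≤ ε) (hy : y ∈ Ioo (-1 : ℝ) 1) :
    profileRatio U y ^ 2 * √(1 - y ^ 2) ≤ 306 * ε ^ 2 := by
  have hpos := one_sub_sq_pos_of_mem_Ioo hy
  have hw := sq_one_add_abs_log_mul_sqrt_le hpos (by nlinarith)
  have hV := abs_profileRatio_le hc hA hy
  calc _ ≤ (3 * ε * (1 + |log (1 - y ^ 2)|)) ^ 2 * √(1 - y ^ 2) :=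
        mul_le_mul_of_nonneg_right (sq_le_sq' (neg_le_of_abs_le hV) (le_of_abs_le hV))
          (sqrt_nonneg _)
    _ = 9 * ε ^ 2 * ((1 + |log (1 - y ^ 2)|) ^ 2 * √(1 - y ^ 2)) := by ring
    _ ≤ 9 * ε ^ 2 * 34 := by gcongr
    _ = 306 * ε ^ 2 := by ring

theorem SolvesProfileODE.abs_profileSqIntegral_le (h : SolvesProfileODE c₃ γ U)
    (hpos : 0 < |c₃| + |γ|) (hsmall : |c₃| + |γ| ≤ 1 / 1000) (hy : y ∈ Ioo (-1 : ℝ) 1) :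
    |profileSqIntegral c₃ γ U y| ≤ |c₃| + |γ| := by
  set ε := |c₃| + |γ|
  refine abs_le_of_hasDerivAt_sq_Ioo (K := 400 * ε ^ 2) (by positivity) ?_
    (fun s hs ↦ h.hasDerivAt_profileSqIntegral hs) h.profileSqIntegral_zero ?_ y hy
  · nlinarith [pi_lt_d2]
  · intro s hs hA
    have hsqrt : 0 < √(1 - s ^ 2) := sqrt_pos.2 (one_sub_sq_pos_of_mem_Ioo hs)
    rw [mul_one_div, lt_div_iff₀ hsqrt]
    nlinarith [profileRatio_sq_mul_sqrt_le le_rfl hA hs]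

theorem SolvesProfileODE.abs_deriv_sub_mul_log_le (h : SolvesProfileODE c₃ γ U)
    (hpos : 0 < |c₃| + |γ|) (hsmall : |c₃| + |γ| ≤ 1 / 1000) (hy : y ∈ Ioo (-1 : ℝ) 1) :
    |deriv U y - c₃ * log (1 - y ^ 2)| ≤ 10 * (|c₃| + |γ|) := by
  set ε := |c₃| + |γ|
  set V := profileRatio U y
  set A := profileSqIntegral c₃ γ U y
  have hsplit : deriv U y - c₃ * log (1 - y ^ 2) =
      c₃ - 2 * y * γ - c₃ * (2 * y * artanh y + log (1 - y ^ 2)) + y * A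
        - (1 - y ^ 2) * V ^ 2 / 2 := by
    rw [h.deriv_eq hy]; simp only [A, profileSqIntegral]; ring
  have hy1 : |y| ≤ 1 := abs_le.2 ⟨hy.1.le, hy.2.le⟩
  have hA := h.abs_profileSqIntegral_le hpos hsmall hy
  have hlog : |c₃ * (2 * y * artanh y + log (1 - y ^ 2))| ≤ 4 * ε := by
    rw [abs_mul, mul_comm 4]
    exact mul_le_mul (by linarith [abs_nonneg γ]) (abs_two_mul_mul_artanh_add_log_le hy)
      (abs_nonneg _) hpos.le
  have hV : (1 - y ^ 2) * V ^ 2 ≤ 306 * ε ^ 2 := by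
    have hx := one_sub_sq_pos_of_mem_Ioo hy
    have h1 : √(1 - y ^ 2) ≤ 1 := sqrt_le_one.2 (by nlinarith)
    calc _ = √(1 - y ^ 2) * (V ^ 2 * √(1 - y ^ 2)) := by
          linear_combination (-V ^ 2) * mul_self_sqrt hx.le
      _ ≤ 1 * (306 * ε ^ 2) := mul_le_mul h1 (profileRatio_sq_mul_sqrt_le le_rfl hA hy)
          (mul_nonneg (sq_nonneg _) (sqrt_nonneg _)) zero_le_one
      _ = _ := one_mul _
  have hVnn : 0 ≤ (1 - y ^ 2) * V ^ 2 :=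
    mul_nonneg (one_sub_sq_pos_of_mem_Ioo hy).le (sq_nonneg _)
  have hc₃ : |c₃| ≤ ε := le_add_of_nonneg_right (abs_nonneg γ)
  have hγ : |γ| ≤ ε := le_add_of_nonneg_left (abs_nonneg c₃)
  have hyγ : |2 * y * γ| ≤ 2 * ε := by
    rw [abs_mul, abs_mul, abs_two]
    nlinarith [abs_nonneg y]
  have hyA : |y * A| ≤ ε := by
    rw [abs_mul]
    nlinarith [abs_nonneg y, abs_nonneg A, hA]
  rw [hsplit, abs_le]
  constructor <;> nlinarith [abs_le.1 hc₃, abs_le.1 hyγ, abs_le.1 hlog, abs_le.1 hyA]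

end

theorem stmt6 (M : ℝ) :
    ∃ μ > 0, ∃ C > 0, ∀ c₃ γ : ℝ, |c₃| + |γ| ≤ μ →
      ∀ U : ℝ → ℝ, SolvesProfileODE c₃ γ U →
        (∀ y ∈ Ioo (-1 : ℝ) 1, |U y| ≤ M * (|c₃| + |γ|)) →
        ∀ y ∈ Ioo (-1 : ℝ) 1,
          |deriv U y - c₃ * Real.log (1 - y ^ 2)| ≤ C * (|c₃| + |γ|) := by
  refine ⟨1 / 1000, by norm_num, 10, by norm_num, fun c₃ γ hsmall U hU hbound y hy ↦ ?_⟩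
  rcases (add_nonneg (abs_nonneg c₃) (abs_nonneg γ)).eq_or_lt with hzero | hpos
  · have hUzero : U =ᶠ[𝓝 y] fun _ ↦ 0 := by
      filter_upwards [Ioo_mem_nhds hy.1 hy.2] with z hz
      simpa [← hzero] using hbound z hz
    have hc₃ : c₃ = 0 := abs_nonpos_iff.1 (by linarith [abs_nonneg γ])
    simp [hUzero.deriv_eq, hc₃]
  · exact hU.abs_deriv_sub_mul_log_le hpos hsmall hy
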